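/- arXiv:math/0406549 — 5 statements merged into one kernel-verified Lean document; each statement's English description precedes it below -/
import Mathlib

section
/- Let X be a compact metrizable space with an abelian group Γ acting minimally by homeomorphisms, with Fréchet–Urysohn enveloping semigroup E, and let v ∈ E be idempotent (v ∘ v = v). Then every continuity point of v : X → X lies in the image vX; in particular vX contains a dense Gδ subset of X. -/
open Filter Topology

/-- The enveloping semigroup: the closure in `X → X` (product topology) of the
set of action maps `x ↦ γ • x`. -/
def envSemigroup (Γ X : Type*) [Group Γ] [TopologicalSpace X] [MulAction Γ X] :
    Set (X → X) :=
  closure (Set.range fun γ : Γ => fun x : X => γ • x)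

/-- If `v` is a pointwise limit of continuous functions on a nonempty Baire metric
space, then for every `ε > 0` and nonempty open `U` there is a nonempty open
`W ⊆ U` on which `v` has oscillation at most `4ε`. -/
theorem exists_open_osc {X : Type*} [MetricSpace X] [BaireSpace X]
    (u : ℕ → X → X) (hu : ∀ n, Continuous (u n)) (v : X → X)
    (hlim : ∀ x, Tendsto (fun n => u n x) atTop (𝓝 (v x)))
    {U : Set X} (hU : IsOpen U) (hUne : U.Nonempty) {ε : ℝ} (hε : 0 < ε) :
    ∃ W : Set X, IsOpen W ∧ W.Nonempty ∧ W ⊆ U ∧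
      ∀ y ∈ W, ∀ z ∈ W, dist (v y) (v z) ≤ 4 * ε := by
  set F : ℕ → Set X := fun n => {x | ∀ m, n ≤ m → dist (u n x) (u m x) ≤ ε} with hF
  have hFc : ∀ n, IsClosed (F n) := by
    intro n
    have : F n = ⋂ m, ⋂ _ : n ≤ m, {x | dist (u n x) (u m x) ≤ ε} := by
      ext x; simp [hF, Set.mem_iInter]
    rw [this]
    exact isClosed_iInter fun m => isClosed_iInter fun _ =>
      isClosed_le (by fun_prop) continuous_const
  have hFU : (⋃ n, F n) = Set.univ := by
    apply Set.eq_univ_of_forall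
    intro x
    have hcauchy : CauchySeq fun n => u n x := (hlim x).cauchySeq
    obtain ⟨n, hn⟩ := Metric.cauchySeq_iff'.1 hcauchy ε hε
    exact Set.mem_iUnion.2 ⟨n, fun m hm => (dist_comm (u n x) (u m x) ▸
      (hn m hm).le).trans_eq rfl⟩
  have hdense := dense_iUnion_interior_of_closed hFc hFU
  obtain ⟨x₀, hx₀, hx₀U⟩ := hdense.exists_mem_open hU hUne
  obtain ⟨n, hx₀n⟩ := Set.mem_iUnion.1 hx₀
  -- On `interior (F n) ∩ U`, `dist (u n y) (v y) ≤ ε`.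
  have hkey : ∀ y ∈ F n, dist (u n y) (v y) ≤ ε := by
    intro y hy
    have : Tendsto (fun m => dist (u n y) (u m y)) atTop (𝓝 (dist (u n y) (v y))) :=
      (continuous_const.dist continuous_id).continuousAt.tendsto.comp (hlim y)
    exact le_of_tendsto this (eventually_atTop.2 ⟨n, fun m hm => hy m hm⟩)
  -- shrink using continuity of `u n` at `x₀`
  have hcont : ContinuousAt (u n) x₀ := (hu n).continuousAt
  have hball : ∀ᶠ y in 𝓝 x₀, dist (u n y) (u n x₀) < ε := by
    have := Metric.tendsto_nhds.1 hcont.tendsto ε hε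
    exact this
  obtain ⟨W, hWsub, hWo, hx₀W⟩ := mem_nhds_iff.1
    (Filter.inter_mem (Filter.inter_mem ((hU.mem_nhds hx₀U))
      ((isOpen_interior.mem_nhds hx₀n))) hball)
  refine ⟨W, hWo, ⟨x₀, hx₀W⟩, fun y hy => (hWsub hy).1.1, ?_⟩
  intro y hy z hz
  have hyF : y ∈ F n := interior_subset (hWsub hy).1.2
  have hzF : z ∈ F n := interior_subset (hWsub hz).1.2
  have h1 := hkey y hyF
  have h2 := hkey z hzF
  have h3 : dist (u n y) (u n x₀) < ε := (hWsub hy).2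
  have h4 : dist (u n z) (u n x₀) < ε := (hWsub hz).2
  have h5 : dist (u n y) (u n z) ≤ ε + ε := by
    calc dist (u n y) (u n z) ≤ dist (u n y) (u n x₀) + dist (u n x₀) (u n z) :=
          dist_triangle _ _ _
      _ ≤ ε + ε := add_le_add h3.le (by rw [dist_comm]; exact h4.le)
  calc dist (v y) (v z) ≤ dist (v y) (u n y) + dist (u n y) (u n z)
        + dist (u n z) (v z) := dist_triangle4 _ _ _ _
    _ ≤ ε + (ε + ε) + ε := by
        rw [dist_comm (v y) (u n y)]
        exact add_le_add (add_le_add h1 h5) h2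
    _ = 4 * ε := by ring

/-- For a minimal action of an abelian group `Γ` on a compact metrizable `X` with
Fréchet–Urysohn enveloping semigroup, every continuity point of an idempotent
`v` of the enveloping semigroup lies in the image `vX`; in particular `vX`
contains a dense `Gδ` subset of `X`. -/
theorem stmt4 (Γ X : Type*) [CommGroup Γ] [TopologicalSpace X] [CompactSpace X]
    [TopologicalSpace.MetrizableSpace X] [MulAction Γ X]
    (hc : ∀ γ : Γ, Continuous fun x : X => γ • x)
    (hmin : ∀ x : X, Dense (MulAction.orbit Γ x))
    (hFU : ∀ A ⊆ envSemigroup Γ X, ∀ p ∈ closure A,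
      ∃ u : ℕ → (X → X), (∀ n, u n ∈ A) ∧ Tendsto u atTop (𝓝 p))
    (v : X → X) (hv : v ∈ envSemigroup Γ X) (hvv : v ∘ v = v) :
    (∀ x : X, ContinuousAt v x → x ∈ Set.range v) ∧
    ∃ S : Set X, S ⊆ Set.range v ∧ Dense S ∧ IsGδ S := by
  letI : MetricSpace X := TopologicalSpace.metrizableSpaceMetric X
  -- v fixes its image
  have hfix : ∀ y ∈ Set.range v, v y = y := by
    rintro _ ⟨z, rfl⟩; exact congrFun hvv z
  -- v commutes with the action
  have hcomm : ∀ (γ : Γ) (x : X), γ • v x = v (γ • x) := by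
    intro γ
    have hclosed : IsClosed {p : X → X | ∀ x, γ • p x = p (γ • x)} := by
      have : {p : X → X | ∀ x, γ • p x = p (γ • x)}
          = ⋂ x, {p : X → X | γ • p x = p (γ • x)} := by
        ext p; simp [Set.mem_iInter]
      rw [this]
      refine isClosed_iInter fun x => isClosed_eq ?_ ?_
      · exact (hc γ).comp (continuous_apply x)
      · exact continuous_apply (γ • x)
    have hgen : (Set.range fun δ : Γ => fun x : X => δ • x)
        ⊆ {p : X → X | ∀ x, γ • p x = p (γ • x)} := by
      rintro _ ⟨δ, rfl⟩ x
      simp only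
      rw [smul_smul, smul_smul, mul_comm]
    exact hclosed.closure_subset (closure_mono hgen hv) 
  -- the range of v is dense (when X is nonempty)
  have hdense : Dense (Set.range v) := by
    rcases isEmpty_or_nonempty X with hX | hX
    · intro x; exact (hX.false x).elim
    · obtain ⟨x₀⟩ := hX
      have horb : MulAction.orbit Γ (v x₀) ⊆ Set.range v := by
        rintro _ ⟨γ, rfl⟩
        exact ⟨γ • x₀, (hcomm γ x₀).symm⟩
      exact Dense.mono horb (hmin (v x₀))
  -- Part 1: continuity points lie in the range
  have part1 : ∀ x : X, ContinuousAt v x → x ∈ Set.range v := by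
    intro x hx
    have hne : (𝓝[Set.range v] x).NeBot :=
      mem_closure_iff_nhdsWithin_neBot.1 (hdense x)
    have h1 : Tendsto v (𝓝[Set.range v] x) (𝓝 (v x)) :=
      hx.tendsto.mono_left nhdsWithin_le_nhds
    have h2 : Tendsto v (𝓝[Set.range v] x) (𝓝 x) := by
      have : Tendsto (fun y => y) (𝓝[Set.range v] x) (𝓝 x) :=
        tendsto_id.mono_left nhdsWithin_le_nhds
      refine this.congr' ?_
      filter_upwards [self_mem_nhdsWithin] with y hy using (hfix y hy).symm
    have : v x = x := tendsto_nhds_unique h1 h2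
    exact ⟨x, this⟩
  refine ⟨part1, ?_⟩
  -- get a sequence of continuous functions converging pointwise to v
  obtain ⟨u, huA, hulim⟩ := hFU (Set.range fun γ : Γ => fun x : X => γ • x)
    subset_closure v hv
  have hu : ∀ n, Continuous (u n) := by
    intro n; obtain ⟨γ, hγ⟩ := huA n; rw [← hγ]; exact hc γ
  have hlim : ∀ x, Tendsto (fun n => u n x) atTop (𝓝 (v x)) := by
    intro x; exact (tendsto_pi_nhds.1 hulim) x
  -- the oscillation sets
  set G : ℕ → Set X := fun n =>
    {x | ∃ W : Set X, IsOpen W ∧ x ∈ W ∧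
      ∀ y ∈ W, ∀ z ∈ W, dist (v y) (v z) ≤ 1 / (n + 1)} with hG
  have hGopen : ∀ n, IsOpen (G n) := by
    intro n
    rw [isOpen_iff_mem_nhds]
    rintro x ⟨W, hWo, hxW, hWosc⟩
    filter_upwards [hWo.mem_nhds hxW] with y hy
    exact ⟨W, hWo, hy, hWosc⟩
  have hGdense : ∀ n, Dense (G n) := by
    intro n
    rw [dense_iff_inter_open]
    intro U hU hUne
    have hε : (0 : ℝ) < 1 / (4 * (n + 1)) := by positivity
    obtain ⟨W, hWo, hWne, hWU, hWosc⟩ :=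
      exists_open_osc u hu v hlim hU hUne hε
    obtain ⟨w, hw⟩ := hWne
    refine ⟨w, hWU hw, W, hWo, hw, fun y hy z hz => ?_⟩
    calc dist (v y) (v z) ≤ 4 * (1 / (4 * (n + 1))) := hWosc y hy z hz
      _ = 1 / (n + 1) := by field_simp
  refine ⟨⋂ n, G n, ?_, ?_, ?_⟩
  · -- points in all G n are continuity points, hence in the range
    intro x hx
    apply part1
    rw [Metric.continuousAt_iff]
    intro ε hε
    obtain ⟨n, hn⟩ := exists_nat_one_div_lt hε
    obtain ⟨W, hWo, hxW, hWosc⟩ := Set.mem_iInter.1 hx n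
    obtain ⟨δ, hδ, hδW⟩ := Metric.isOpen_iff.1 hWo x hxW
    refine ⟨δ, hδ, fun {y} hy => ?_⟩
    exact lt_of_le_of_lt (hWosc y (hδW hy) x hxW) hn
  · exact dense_iInter_of_isOpen hGopen hGdense
  · exact .iInter fun n => (hGopen n).isGδ
end

section
/- Let X be a compact Hausdorff space and Γ a group acting on X by homeomorphisms. The enveloping semigroup E(X,Γ) equals all of X^X if and only if for every n and every n-tuple (x_1,…,x_n) of pairwise distinct points of X, the Γ-orbit of (x_1,…,x_n) is dense in X^n. -/
/-- The enveloping semigroup `E(X,Γ)` equals all of `X^X` iff for every `n` and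
every `n`-tuple of pairwise distinct points of `X`, the diagonal `Γ`-orbit of the
tuple is dense in `X^n`. -/
theorem stmt6 (Γ X : Type*) [Group Γ] [TopologicalSpace X] [CompactSpace X]
    [T2Space X] [MulAction Γ X]
    (hc : ∀ γ : Γ, Continuous fun x : X => γ • x) :
    closure (Set.range fun γ : Γ => fun x : X => γ • x) = Set.univ ↔
      ∀ (n : ℕ) (x : Fin n → X), Function.Injective x →
        Dense (Set.range fun γ : Γ => fun i : Fin n => γ • x i) := by
  classical
  constructor
  · intro hcl n x hx z
    rw [mem_closure_iff_nhds]
    intro t ht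
    rw [nhds_pi, Filter.mem_pi'] at ht
    obtain ⟨I, s, hs, hsub⟩ := ht
    -- build f : X → X with f (x i) = z i
    set f : X → X := fun a => if h : ∃ i, x i = a then z h.choose else a with hf
    have hfx : ∀ i, f (x i) = z i := by
      intro i
      have h : ∃ j, x j = x i := ⟨i, rfl⟩
      simp only [hf, dif_pos h]
      exact congrArg z (hx h.choose_spec)
    have hfU : (⋂ i, {g : X → X | g (x i) ∈ s i}) ∈ nhds f := by
      rw [Filter.iInter_mem]
      intro i
      have : ContinuousAt (fun g : X → X => g (x i)) f := (continuous_apply (x i)).continuousAt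
      have := this.preimage_mem_nhds (by rw [hfx i]; exact hs i)
      exact this
    have hfc : f ∈ closure (Set.range fun γ : Γ => fun x : X => γ • x) := by
      rw [hcl]; trivial
    rw [mem_closure_iff_nhds] at hfc
    obtain ⟨g, hgU, γ, hγ⟩ := hfc _ hfU
    refine ⟨fun i => γ • x i, ?_, ⟨γ, rfl⟩⟩
    apply hsub
    intro i _
    have := Set.mem_iInter.1 hgU i
    rw [← hγ] at this
    exact this
  · intro hd
    rw [Set.eq_univ_iff_forall]
    intro f
    rw [mem_closure_iff_nhds]
    intro t ht
    rw [nhds_pi, Filter.mem_pi'] at ht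
    obtain ⟨I, s, hs, hsub⟩ := ht
    set n := I.card with hn
    set e : {a // a ∈ I} ≃ Fin n := I.equivFin with he
    set x : Fin n → X := fun i => (e.symm i : X) with hxdef
    have hx : Function.Injective x :=
      Subtype.val_injective.comp e.symm.injective
    have hz := hd n x hx (fun i => f (x i))
    rw [mem_closure_iff_nhds] at hz
    have hU : (Set.univ.pi fun i => s (x i)) ∈ nhds (fun i => f (x i)) :=
      set_pi_mem_nhds Set.finite_univ (fun i _ => hs (x i))
    obtain ⟨g, hgU, γ, hγ⟩ := hz _ hU
    refine ⟨fun a => γ • a, ?_, ⟨γ, rfl⟩⟩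
    apply hsub
    intro a ha
    have hxa : x (e ⟨a, ha⟩) = a := by simp [hxdef]
    have := Set.mem_univ_pi.1 (hγ ▸ hgU) (e ⟨a, ha⟩)
    simpa [hxa] using this
end

section
/- Let X, Y be compact Hausdorff spaces with a group Γ acting on both, (X,Γ) minimal, and π : M → X a continuous surjective Γ-equivariant map from a minimal Γ-system M. Then π is semi-open: for every nonempty open subset V of M, the interior of π(closure(V)) is nonempty. -/
/-!
The translates of `V` cover `M` by minimality, hence finitely many of them do by compactness.
Pushing forward, finitely many translates of the closed set `π '' closure V` cover `X`, so by
the Baire category theorem one of them, and hence `π '' closure V` itself, has nonempty interior.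
-/

open Set Pointwise

section

variable {G M X : Type*} [Group G] [TopologicalSpace M] [TopologicalSpace X]
  [MulAction G M] [MulAction G X]

theorem IsClosed.interior_nonempty_of_biUnion_smul_eq_univ [BaireSpace X] [Nonempty X]
    [ContinuousConstSMul G X] {F : Set X} (hF : IsClosed F) {S : Set G} (hS : S.Countable)
    (hcover : ⋃ g ∈ S, g • F = univ) : (interior F).Nonempty := by
  obtain ⟨x, hx⟩ := (dense_biUnion_interior_of_closed (fun g _ => hF.smul g) hS hcover).nonempty
  obtain ⟨g, -, hg⟩ := mem_iUnion₂.1 hx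
  rw [interior_smul] at hg
  exact smul_set_nonempty.1 ⟨x, hg⟩

theorem interior_image_closure_nonempty_of_isMinimal [CompactSpace M] [MulAction.IsMinimal G M]
    [ContinuousConstSMul G M] [T2Space X] [BaireSpace X] [ContinuousConstSMul G X]
    (π : M →[G] X) (hπc : Continuous π) (hπs : Function.Surjective π) {V : Set M}
    (hV : IsOpen V) (hVne : V.Nonempty) : (interior (π '' closure V)).Nonempty := by
  obtain ⟨I, hI⟩ := isCompact_univ.exists_finite_cover_smul G hV hVne
  have : Nonempty X := ⟨π hVne.some⟩
  refine (isClosed_closure.isCompact.image hπc).isClosed.interior_nonempty_of_biUnion_smul_eq_univ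
    I.countable_toSet (eq_univ_of_univ_subset ?_)
  calc univ = π '' univ := (image_univ_of_surjective hπs).symm
    _ ⊆ π '' ⋃ g ∈ I, g • closure V :=
        image_mono (hI.trans (iUnion₂_mono fun g _ => smul_set_mono subset_closure))
    _ = ⋃ g ∈ (I : Set G), g • π '' closure V := by
        simp only [image_iUnion₂, image_smul_set, Finset.mem_coe]

end

theorem stmt11_general (Γ M X : Type*) [Group Γ]
    [TopologicalSpace M] [CompactSpace M]
    [TopologicalSpace X] [CompactSpace X] [T2Space X]
    [MulAction Γ M] [MulAction Γ X]
    (hcM : ∀ γ : Γ, Continuous fun m : M => γ • m)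
    (hcX : ∀ γ : Γ, Continuous fun x : X => γ • x)
    (hminM : ∀ m : M, Dense (MulAction.orbit Γ m))
    (π : M → X) (hπc : Continuous π) (hπs : Function.Surjective π)
    (hπe : ∀ (γ : Γ) (m : M), π (γ • m) = γ • π m) :
    ∀ V : Set M, IsOpen V → V.Nonempty → (interior (π '' closure V)).Nonempty := by
  have : ContinuousConstSMul Γ M := ⟨hcM⟩
  have : ContinuousConstSMul Γ X := ⟨hcX⟩
  have : MulAction.IsMinimal Γ M := ⟨hminM⟩
  exact fun V hV hVne =>
    interior_image_closure_nonempty_of_isMinimal ⟨π, hπe⟩ hπc hπs hV hVne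

/-- A factor map between minimal systems is semi-open: if `π : M → X` is a
continuous surjective `Γ`-equivariant map between compact Hausdorff minimal
`Γ`-systems, then for every nonempty open `V ⊆ M` the interior of
`π(closure V)` is nonempty. -/
theorem stmt11 (Γ M X : Type*) [Group Γ]
    [TopologicalSpace M] [CompactSpace M] [T2Space M]
    [TopologicalSpace X] [CompactSpace X] [T2Space X]
    [MulAction Γ M] [MulAction Γ X]
    (hcM : ∀ γ : Γ, Continuous fun m : M => γ • m)
    (hcX : ∀ γ : Γ, Continuous fun x : X => γ • x)
    (hminM : ∀ m : M, Dense (MulAction.orbit Γ m))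
    (hminX : ∀ x : X, Dense (MulAction.orbit Γ x))
    (π : M → X) (hπc : Continuous π) (hπs : Function.Surjective π)
    (hπe : ∀ (γ : Γ) (m : M), π (γ • m) = γ • π m) :
    ∀ V : Set M, IsOpen V → V.Nonempty → (interior (π '' closure V)).Nonempty :=
  stmt11_general Γ M X hcM hcX hminM π hπc hπs hπe
end

section
/- Let Γ be an abelian group acting minimally on a compact metric space X, and suppose the enveloping semigroup E(X,Γ) is Fréchet–Urysohn. If (X,Γ) is weakly mixing (the product system (X×X, Γ) is topologically transitive), then X is a single point. -/
open Filter Topology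

/-- A pointwise limit of continuous functions on a Baire space has a point of
continuity. -/
lemma baireOne_exists_continuousAt {X Y : Type*} [TopologicalSpace X] [BaireSpace X]
    [Nonempty X] [MetricSpace Y] {f : ℕ → X → Y} {g : X → Y}
    (hf : ∀ n, Continuous (f n))
    (h : ∀ x, Tendsto (fun n => f n x) atTop (𝓝 (g x))) :
    ∃ x, ContinuousAt g x := by
  set A : ℕ → ℕ → Set X := fun k N =>
    ⋂ (m) (n) (_ : N ≤ m) (_ : N ≤ n), {x | dist (f m x) (f n x) ≤ 1 / (k + 1)} with hA
  have hclosed : ∀ k N, IsClosed (A k N) := by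
    intro k N
    refine isClosed_iInter fun m => isClosed_iInter fun n =>
      isClosed_iInter fun _ => isClosed_iInter fun _ => ?_
    exact isClosed_le (Continuous.dist (hf m) (hf n)) continuous_const
  have hmemA : ∀ k N x, x ∈ A k N ↔
      ∀ m n, N ≤ m → N ≤ n → dist (f m x) (f n x) ≤ 1 / (k + 1) := by
    intro k N x
    simp [hA, Set.mem_iInter]
  have hcover : ∀ k, (⋃ N, A k N) = Set.univ := by
    intro k
    refine Set.eq_univ_of_forall fun x => ?_
    have hpos : (0 : ℝ) < 1 / (2 * (k + 1)) := by positivity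
    obtain ⟨N, hN⟩ := (Metric.tendsto_atTop.1 (h x)) _ hpos
    refine Set.mem_iUnion.2 ⟨N, (hmemA k N x).2 fun m n hm hn => ?_⟩
    calc dist (f m x) (f n x) ≤ dist (f m x) (g x) + dist (f n x) (g x) :=
          dist_triangle_right _ _ _
      _ ≤ 1 / (2 * (k + 1)) + 1 / (2 * (k + 1)) :=
          add_le_add (le_of_lt (hN m hm)) (le_of_lt (hN n hn))
      _ = 1 / (k + 1 : ℝ) := by
          have hk : (k : ℝ) + 1 ≠ 0 := by positivity
          field_simp
          norm_num
  have hUdense : ∀ k, Dense (⋃ N, interior (A k N)) := fun k =>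
    dense_iUnion_interior_of_closed (hclosed k) (hcover k)
  have hGdense : Dense (⋂ k, ⋃ N, interior (A k N)) :=
    dense_iInter_of_isOpen (fun k => isOpen_iUnion fun N => isOpen_interior) hUdense
  obtain ⟨x, hx⟩ := hGdense.nonempty
  refine ⟨x, ?_⟩
  -- the key estimate: on `interior (A k N)`, `g` is uniformly `1/(k+1)`-close to `f N`
  have key : ∀ k N y, y ∈ A k N → dist (g y) (f N y) ≤ 1 / (k + 1) := by
    intro k N y hy
    refine le_of_tendsto (Tendsto.dist (h y) tendsto_const_nhds) ?_
    filter_upwards [eventually_ge_atTop N] with m hm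
    exact (hmemA k N y).1 hy m N hm le_rfl
  rw [ContinuousAt, Metric.tendsto_nhds]
  intro ε hε
  obtain ⟨k, hk⟩ := exists_nat_one_div_lt (show (0:ℝ) < ε / 4 by linarith)
  have hxk := Set.mem_iInter.1 hx k
  obtain ⟨N, hN⟩ := Set.mem_iUnion.1 hxk
  have hnb : interior (A k N) ∩ (f N) ⁻¹' Metric.ball (f N x) (ε / 4) ∈ 𝓝 x := by
    refine Filter.inter_mem (isOpen_interior.mem_nhds hN) ?_
    exact ((hf N).continuousAt).preimage_mem_nhds
      (Metric.ball_mem_nhds _ (by linarith))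
  filter_upwards [hnb] with y hy
  have h1 : dist (g y) (f N y) ≤ 1 / (k + 1) := key k N y (interior_subset hy.1)
  have h2 : dist (f N y) (f N x) < ε / 4 := hy.2
  have h3 : dist (f N x) (g x) ≤ 1 / (k + 1) := by
    have := key k N x (interior_subset hN)
    simpa [dist_comm] using this
  calc dist (g y) (g x) ≤ dist (g y) (f N y) + dist (f N y) (f N x) + dist (f N x) (g x) :=
        dist_triangle4 _ _ _ _
    _ < ε / 4 + ε / 4 + ε / 4 := by
        have : (1 : ℝ) / (k + 1) < ε / 4 := hk
        linarith
    _ < ε := by linarith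

/-- A minimal, weakly mixing, tame (Fréchet–Urysohn enveloping semigroup)
system on a compact metric space with an abelian acting group is trivial. -/
theorem stmt13 (Γ X : Type*) [CommGroup Γ] [MetricSpace X] [CompactSpace X]
    [MulAction Γ X]
    (hc : ∀ γ : Γ, Continuous fun x : X => γ • x)
    (hmin : ∀ x : X, Dense (MulAction.orbit Γ x))
    (hFU : ∀ A ⊆ envSemigroup Γ X, ∀ p ∈ closure A,
      ∃ u : ℕ → (X → X), (∀ n, u n ∈ A) ∧ Tendsto u atTop (𝓝 p))
    (hwm : ∀ U V : Set (X × X), IsOpen U → U.Nonempty → IsOpen V → V.Nonempty →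
      ∃ γ : Γ, (((fun q : X × X => (γ • q.1, γ • q.2)) '' U) ∩ V).Nonempty) :
    Subsingleton X := by
  rcases isEmpty_or_nonempty X with hX | hX
  · exact Subsingleton.intro fun a b => (hX.false a).elim
  -- continuity of the diagonal action maps on X × X
  have hc2 : ∀ γ : Γ, Continuous fun q : X × X => ((γ • q.1 : X), (γ • q.2 : X)) :=
    fun γ => ((hc γ).comp continuous_fst).prodMk ((hc γ).comp continuous_snd)
  -- Step 1: transitive point (x, y) for the product system
  obtain ⟨x, y, htrans⟩ : ∃ x y : X, ∀ a b : X,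
      (a, b) ∈ closure (Set.range fun γ : Γ => ((γ • x : X), (γ • y : X))) := by
    obtain ⟨b, hbc, hbne, hb⟩ := TopologicalSpace.exists_countable_basis (X × X)
    haveI : Countable b := hbc.to_subtype
    set O : b → Set (X × X) := fun B =>
      ⋃ γ : Γ, (fun q : X × X => ((γ • q.1 : X), (γ • q.2 : X))) ⁻¹' (B : Set (X × X))
        with hO
    have hOopen : ∀ B, IsOpen (O B) := fun B =>
      isOpen_iUnion fun γ => (hb.isOpen B.2).preimage (hc2 γ)
    have hOdense : ∀ B, Dense (O B) := by
      intro B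
      rw [dense_iff_inter_open]
      intro U hU hUne
      have hBne : (B : Set (X × X)).Nonempty := by
        rcases Set.eq_empty_or_nonempty (B : Set (X × X)) with h | h
        · exact absurd (h ▸ B.2) hbne
        · exact h
      obtain ⟨γ, v, hv⟩ := hwm U B hU hUne (hb.isOpen B.2) hBne
      obtain ⟨⟨u, hu, rfl⟩, hvB⟩ := hv
      exact ⟨u, hu, Set.mem_iUnion.2 ⟨γ, hvB⟩⟩
    have : Dense (⋂ B, O B) := dense_iInter_of_isOpen hOopen hOdense
    obtain ⟨q, hq⟩ := this.nonempty
    refine ⟨q.1, q.2, fun a s => ?_⟩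
    rw [mem_closure_iff]
    intro V hV haV
    obtain ⟨B, hBb, haB, hBV⟩ := hb.exists_subset_of_mem_open haV hV
    obtain ⟨γ, hγ⟩ := Set.mem_iUnion.1 (Set.mem_iInter.1 hq ⟨B, hBb⟩)
    exact ⟨(γ • q.1, γ • q.2), hBV hγ, γ, rfl⟩
  -- Step 2: an element p of the enveloping semigroup with p x = p y
  set Act : Set (X → X) := Set.range fun γ : Γ => fun a : X => γ • a with hAct
  have hActE : Act ⊆ envSemigroup Γ X := subset_closure
  have hEcomp : IsCompact (envSemigroup Γ X) := isClosed_closure.isCompact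
  obtain ⟨p, hpE, hpx, hpy⟩ : ∃ p ∈ envSemigroup Γ X, p x = x ∧ p y = x := by
    have hev : Continuous fun f : X → X => ((f x, f y) : X × X) :=
      (continuous_apply x).prodMk (continuous_apply y)
    have hKc : IsClosed ((fun f : X → X => ((f x, f y) : X × X)) '' envSemigroup Γ X) :=
      (hEcomp.image hev).isClosed
    have hsub : (Set.range fun γ : Γ => ((γ • x : X), (γ • y : X))) ⊆
        (fun f : X → X => ((f x, f y) : X × X)) '' envSemigroup Γ X := by
      rintro _ ⟨γ, rfl⟩
      exact ⟨fun a => γ • a, hActE ⟨γ, rfl⟩, rfl⟩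
    have := (closure_minimal hsub hKc) (htrans x x)
    obtain ⟨p, hpE, hp⟩ := this
    exact ⟨p, hpE, congrArg Prod.fst hp, congrArg Prod.snd hp⟩
  have hpxy : p x = p y := by rw [hpx, hpy]
  -- Step 3: p is a pointwise limit of a sequence of action maps
  obtain ⟨u, humem, hconv⟩ := hFU Act hActE p hpE
  choose g hg using fun n => humem n
  have hpt : ∀ a : X, Tendsto (fun n => g n • a) atTop (𝓝 (p a)) := by
    intro a
    have : Tendsto (fun n => u n a) atTop (𝓝 (p a)) :=
      ((continuous_apply a).tendsto p).comp hconv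
    refine this.congr fun n => ?_
    rw [← hg n]
  -- Step 4: p is Γ-equivariant (here we use commutativity of Γ)
  have hequiv : ∀ (γ : Γ) (a : X), p (γ • a) = γ • p a := by
    intro γ a
    have h1 : Tendsto (fun n => g n • (γ • a)) atTop (𝓝 (p (γ • a))) := hpt (γ • a)
    have h2 : Tendsto (fun n => g n • (γ • a)) atTop (𝓝 (γ • p a)) := by
      have := ((hc γ).tendsto (p a)).comp (hpt a)
      refine this.congr fun n => ?_
      simp only [Function.comp]
      rw [smul_smul, smul_smul, mul_comm]
    exact tendsto_nhds_unique h1 h2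
  -- Step 5: p has a continuity point
  obtain ⟨a₀, ha₀⟩ : ∃ a, ContinuousAt p a :=
    baireOne_exists_continuousAt (f := fun n => fun a => g n • a) (g := p)
      (fun n => hc (g n)) hpt
  -- the set of continuity points is Γ-invariant
  have hCinv : ∀ (γ : Γ) (a : X), ContinuousAt p a → ContinuousAt p (γ • a) := by
    intro γ a ha
    have h1 : ContinuousAt (fun b : X => γ⁻¹ • b) (γ • a) := (hc γ⁻¹).continuousAt
    have h2 : ContinuousAt p ((fun b : X => γ⁻¹ • b) (γ • a)) := by
      simpa using ha
    have h3 : ContinuousAt (fun b : X => γ • b) ((p ∘ fun b : X => γ⁻¹ • b) (γ • a)) :=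
      (hc γ).continuousAt
    have hcomp : ContinuousAt ((fun b : X => γ • b) ∘ p ∘ fun b : X => γ⁻¹ • b) (γ • a) :=
      h3.comp (h2.comp h1)
    refine hcomp.congr (Filter.Eventually.of_forall fun b => ?_)
    show γ • p (γ⁻¹ • b) = p b
    rw [hequiv, smul_inv_smul]
  -- Step 6: p is constant on its continuity points
  have hconst : ∀ a b : X, ContinuousAt p a → ContinuousAt p b → p a = p b := by
    intro a b ha hb
    have hmem := htrans a b
    obtain ⟨s, hs, hlim⟩ := mem_closure_iff_seq_limit.1 hmem
    choose δ hδ using hs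
    have hfst : Tendsto (fun n => (δ n • x : X)) atTop (𝓝 a) := by
      have := (continuous_fst.tendsto ((a, b) : X × X)).comp hlim
      refine this.congr fun n => ?_
      simp [Function.comp_apply, ← hδ n]
    have hsnd : Tendsto (fun n => (δ n • y : X)) atTop (𝓝 b) := by
      have := (continuous_snd.tendsto ((a, b) : X × X)).comp hlim
      refine this.congr fun n => ?_
      simp [Function.comp_apply, ← hδ n]
    have t1 : Tendsto (fun n => p (δ n • x)) atTop (𝓝 (p a)) := ha.tendsto.comp hfst
    have t2 : Tendsto (fun n => p (δ n • y)) atTop (𝓝 (p b)) := hb.tendsto.comp hsnd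
    have heq : (fun n => p (δ n • x)) = fun n => p (δ n • y) := by
      funext n
      rw [hequiv, hequiv, hpxy]
    exact tendsto_nhds_unique t1 (heq ▸ t2)
  -- Step 7: p a₀ is a fixed point of the action
  have hfix : ∀ γ : Γ, γ • p a₀ = p a₀ := by
    intro γ
    have := hconst (γ • a₀) a₀ (hCinv γ a₀ ha₀) ha₀
    rw [hequiv] at this
    exact this
  -- Step 8: minimality forces X to be the single point p a₀
  have horb : MulAction.orbit Γ (p a₀) ⊆ {p a₀} := by
    rintro _ ⟨γ, rfl⟩
    exact hfix γ
  have hdense : Dense ({p a₀} : Set X) := (hmin (p a₀)).mono horb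
  refine Subsingleton.intro fun b₁ b₂ => ?_
  have h1 : b₁ ∈ closure ({p a₀} : Set X) := hdense.closure_eq ▸ Set.mem_univ b₁
  have h2 : b₂ ∈ closure ({p a₀} : Set X) := hdense.closure_eq ▸ Set.mem_univ b₂
  rw [closure_singleton] at h1 h2
  rw [Set.mem_singleton_iff.1 h1, Set.mem_singleton_iff.1 h2]
end

section
/- Let E be a compact right-topological semigroup that is the enveloping semigroup of a minimal metric system with E metrizable, and let I ⊆ E be a minimal left ideal with idempotent v = v², G = vI. If the compact set vI carries a group structure (from Ellis theory) in which both left and right multiplications are continuous, then vI is a compact topological group (multiplication jointly continuous and inversion continuous). -/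
/-!
For a compact metric space `M` with separately continuous multiplication, let `S ε δ` be the set
of `a` for which `δ` is a modulus of uniform continuity of `b ↦ a * b` at scale `ε`. Continuity of
right translations makes `S ε δ` closed, and uniform continuity of each left translation makes the
`S ε (1/(n+1))` cover `M`. By Baire, the points lying for every `ε` in the interior of some
`S ε δ` are dense, and at such a point `a₀` multiplication is jointly continuous at `(a₀, b)` for
all `b`. In a group, translating by `a a₀⁻¹` spreads this joint continuity everywhere. Inversion
is then continuous because `F⁻¹` is the projection of the compact set `{(x, y) | x * y = 1, y ∈ F}`.
-/

open Topology Filter Set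

section SeparatelyContinuousMul

variable {M : Type*} [Mul M] [MetricSpace M]

def leftMulModulusSet (ε δ : ℝ) : Set M :=
  {a | ∀ b b' : M, dist b b' ≤ δ → dist (a * b) (a * b') ≤ ε}

variable [SeparatelyContinuousMul M]

theorem isClosed_leftMulModulusSet (ε δ : ℝ) : IsClosed (leftMulModulusSet (M := M) ε δ) := by
  have : leftMulModulusSet (M := M) ε δ =
      ⋂ (b : M) (b' : M) (_ : dist b b' ≤ δ), {a | dist (a * b) (a * b') ≤ ε} := by
    ext a; simp [leftMulModulusSet]
  rw [this]
  exact isClosed_iInter fun b => isClosed_iInter fun b' => isClosed_iInter fun _ =>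
    isClosed_le ((continuous_mul_const b).dist (continuous_mul_const b')) continuous_const

theorem continuousAt_mul_of_forall_mem_interior {a₀ : M}
    (ha₀ : ∀ m : ℕ, ∃ n : ℕ, a₀ ∈ interior (leftMulModulusSet (1 / (m + 1)) (1 / (n + 1))))
    (b₀ : M) : ContinuousAt (fun p : M × M => p.1 * p.2) (a₀, b₀) := by
  rw [ContinuousAt, Metric.tendsto_nhds]
  intro ε hε
  obtain ⟨m, hm⟩ := exists_nat_one_div_lt (half_pos hε)
  obtain ⟨n, hn⟩ := ha₀ m
  have hA : {a | a ∈ interior (leftMulModulusSet (1 / (m + 1)) (1 / (n + 1))) ∧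
      dist (a * b₀) (a₀ * b₀) < ε / 2} ∈ 𝓝 a₀ :=
    inter_mem (isOpen_interior.mem_nhds hn)
      (Metric.tendsto_nhds.1 ((continuous_mul_const b₀).tendsto a₀) _ (half_pos hε))
  have hB : Metric.closedBall b₀ (1 / (n + 1)) ∈ 𝓝 b₀ :=
    Metric.closedBall_mem_nhds _ (by positivity)
  rw [nhds_prod_eq]
  filter_upwards [prod_mem_prod hA hB] with p ⟨⟨hp₁, hp₁b₀⟩, hp₂⟩
  calc dist (p.1 * p.2) (a₀ * b₀)
      ≤ dist (p.1 * p.2) (p.1 * b₀) + dist (p.1 * b₀) (a₀ * b₀) := dist_triangle _ _ _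
    _ < 1 / (m + 1) + ε / 2 := add_lt_add_of_le_of_lt (interior_subset hp₁ _ _ hp₂) hp₁b₀
    _ < ε := by linarith

variable [CompactSpace M]

theorem iUnion_leftMulModulusSet {ε : ℝ} (hε : 0 < ε) :
    ⋃ n : ℕ, leftMulModulusSet (M := M) ε (1 / (n + 1)) = univ := by
  refine eq_univ_of_forall fun a => mem_iUnion.2 ?_
  obtain ⟨δ, hδ, hδε⟩ := Metric.uniformContinuous_iff.1
    (CompactSpace.uniformContinuous_of_continuous (continuous_const_mul a)) ε hε
  obtain ⟨n, hn⟩ := exists_nat_one_div_lt hδ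
  exact ⟨n, fun b b' hbb' => (hδε (hbb'.trans_lt hn)).le⟩

theorem dense_setOf_forall_continuousAt_mul :
    Dense {a : M | ∀ b, ContinuousAt (fun p : M × M => p.1 * p.2) (a, b)} := by
  have hdense : Dense (⋂ m : ℕ, ⋃ n : ℕ,
      interior (leftMulModulusSet (M := M) (1 / (m + 1)) (1 / (n + 1)))) :=
    dense_iInter_of_isOpen (fun _ => isOpen_iUnion fun _ => isOpen_interior) fun _ =>
      dense_iUnion_interior_of_closed (fun _ => isClosed_leftMulModulusSet _ _)
        (iUnion_leftMulModulusSet (by positivity))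
  refine hdense.mono fun a ha => continuousAt_mul_of_forall_mem_interior fun m => ?_
  exact mem_iUnion.1 (mem_iInter.1 ha m)

end SeparatelyContinuousMul

section Group

variable {G : Type*} [Group G] [TopologicalSpace G]

theorem ContinuousMul.of_forall_continuousAt_mul [SeparatelyContinuousMul G] (a₀ : G)
    (h : ∀ b, ContinuousAt (fun p : G × G => p.1 * p.2) (a₀, b)) : ContinuousMul G := by
  refine ⟨continuous_iff_continuousAt.2 fun ⟨a, b⟩ => ?_⟩
  have hshift : ContinuousAt (fun p : G × G => (a₀ * a⁻¹ * p.1, p.2)) (a, b) :=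
    (((continuous_const_mul _).comp continuous_fst).prodMk continuous_snd).continuousAt
  have := (continuous_const_mul (a * a₀⁻¹)).continuousAt.comp
    ((h b).comp_of_eq hshift (by simp))
  convert this using 1
  ext p
  simp [mul_assoc]

theorem ContinuousInv.of_compactSpace [CompactSpace G] [T2Space G] [ContinuousMul G] :
    ContinuousInv G := by
  refine ⟨continuous_iff_isClosed.2 fun F hF => ?_⟩
  have hproj : (fun x : G => x⁻¹) ⁻¹' F = Prod.fst '' {p : G × G | p.1 * p.2 = 1 ∧ p.2 ∈ F} := by
    ext x
    simp [mul_eq_one_iff_inv_eq]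
  rw [hproj]
  exact ((isClosed_eq continuous_mul continuous_const).inter
    (hF.preimage continuous_snd)).isCompact.image continuous_fst |>.isClosed

end Group

/-- Ellis's theorem in the situation of a metrizable enveloping semigroup: a
group `G` carrying a compact metrizable topology in which all left and right
translations are continuous is a (compact) topological group. -/
theorem stmt15 (G : Type*) [Group G] [TopologicalSpace G] [CompactSpace G]
    [TopologicalSpace.MetrizableSpace G]
    (hl : ∀ a : G, Continuous fun b : G => a * b)
    (hr : ∀ a : G, Continuous fun b : G => b * a) :
    IsTopologicalGroup G := by
  let := TopologicalSpace.metrizableSpaceMetric G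
  have : SeparatelyContinuousMul G := ⟨hl _, hr _⟩
  obtain ⟨a₀, ha₀⟩ := (dense_setOf_forall_continuousAt_mul (M := G)).nonempty
  have := ContinuousMul.of_forall_continuousAt_mul a₀ ha₀
  have := ContinuousInv.of_compactSpace (G := G)
  exact {}
end
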